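/- Ostrowski-type inequality, case of disjoint intervals: Let a < b ≤ c < d, and set M = max{b−a, d−c}, m = min{b−a, d−c}. Then for every modulus of continuity ω, every real Banach space E, and every f ∈ H^ω([a,d],E), ‖(1/(b−a))∫_a^b f(t) dt − (1/(d−c))∫_c^d f(t) dt‖ ≤ (1/(M+m))·∫_{c−b}^{d−a} ω(s) ds. -/

import Mathlib

open MeasureTheory Set

/-- A modulus of continuity: `ω 0 = 0`, continuous, non-decreasing and subadditive on `[0, ∞)`. -/
def IsModulus (ω : ℝ → ℝ) : Prop :=
  ω 0 = 0 ∧ ContinuousOn ω (Set.Ici 0) ∧ MonotoneOn ω (Set.Ici 0) ∧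
    ∀ s t : ℝ, 0 ≤ s → 0 ≤ t → ω (s + t) ≤ ω s + ω t

/-- The class `H^ω([a,b], E)`. -/
def HHolder {E : Type*} [NormedAddCommGroup E] (ω : ℝ → ℝ) (a b : ℝ) (f : ℝ → E) : Prop :=
  ∀ s ∈ Set.Icc a b, ∀ t ∈ Set.Icc a b, ‖f t - f s‖ ≤ ω |t - s|

open Filter Topology intervalIntegral

/-!
Parametrize `[a, b]` backwards from `b` and `[c, d]` forwards from `c`, both by `r ∈ [0, 1]`.
The difference of the two averages becomes `∫₀¹ (f (b + (a - b) r) - f (c + (d - c) r)) dr`, and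
the two points are at distance `(c - b) + ((d - a) - (c - b)) r`, so the integrand is bounded by
`ω` along the parametrization of `[c - b, d - a]`, whose integral over `[0, 1]` is the average of
`ω` over that interval. Finally `M + m = (b - a) + (d - c) = (d - a) - (c - b)`.
-/

theorem HHolder.continuousOn {E : Type*} [NormedAddCommGroup E] {ω : ℝ → ℝ} {a b : ℝ}
    {f : ℝ → E} (hf : HHolder ω a b f) (hω0 : ω 0 = 0)
    (hωc : ContinuousWithinAt ω (Ici 0) 0) : ContinuousOn f (Icc a b) := by
  intro x hx
  rw [ContinuousWithinAt, tendsto_iff_norm_sub_tendsto_zero]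
  have hdist : Tendsto (fun t => |t - x|) (𝓝[Icc a b] x) (𝓝[Ici 0] 0) := by
    refine tendsto_nhdsWithin_of_tendsto_nhds_of_eventually_within _ ?_
      (Eventually.of_forall fun t => abs_nonneg (t - x))
    simpa using ((continuous_sub_right x).abs.tendsto x).mono_left nhdsWithin_le_nhds
  have hω : Tendsto (fun t => ω |t - x|) (𝓝[Icc a b] x) (𝓝 0) := by
    rw [← hω0]
    exact hωc.tendsto.comp hdist
  refine squeeze_zero' (Eventually.of_forall fun t => norm_nonneg _) ?_ hω
  filter_upwards [eventually_mem_nhdsWithin] with t ht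
  exact hf x hx t ht

theorem add_mul_sub_mem_uIcc {p q r : ℝ} (hr : r ∈ Icc (0 : ℝ) 1) :
    p + (q - p) * r ∈ uIcc p q := by
  simpa [smul_eq_mul, mul_comm] using
    (convex_uIcc p q).add_smul_sub_mem left_mem_uIcc right_mem_uIcc hr

theorem ContinuousOn.intervalIntegrable_comp_add_mul_sub {E : Type*} [NormedAddCommGroup E]
    {f : ℝ → E} {p q : ℝ} (hf : ContinuousOn f (uIcc p q)) :
    IntervalIntegrable (fun r => f (p + (q - p) * r)) volume 0 1 :=
  ContinuousOn.intervalIntegrable <| hf.comp (by fun_prop) fun _ hr =>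
    add_mul_sub_mem_uIcc (by rwa [uIcc_of_le zero_le_one] at hr)

theorem inv_smul_integral_eq_integral_comp_add_mul_sub {E : Type*} [NormedAddCommGroup E]
    [NormedSpace ℝ E] {p q : ℝ} (hpq : p ≠ q) (f : ℝ → E) :
    (q - p)⁻¹ • ∫ t in p..q, f t = ∫ r in (0 : ℝ)..1, f (p + (q - p) * r) := by
  rw [integral_comp_add_mul f (sub_ne_zero.2 hpq.symm)]
  simp

theorem ostrowski_disjoint_general
    {E : Type*} [NormedAddCommGroup E] [NormedSpace ℝ E]
    (a b c d : ℝ) (hab : a < b) (hbc : b ≤ c) (hcd : c < d)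
    (M m : ℝ) (hM : M = max (b - a) (d - c)) (hm : m = min (b - a) (d - c))
    (ω : ℝ → ℝ) (hω : IsModulus ω)
    (f : ℝ → E) (hf : HHolder ω a d f) :
    ‖((b - a)⁻¹ • ∫ t in a..b, f t) - (d - c)⁻¹ • ∫ t in c..d, f t‖ ≤
      (1 / (M + m)) * ∫ s in (c - b)..(d - a), ω s := by
  obtain ⟨hω0, hωc, -, -⟩ := hω
  have hfc := hf.continuousOn hω0 (hωc 0 self_mem_Ici)
  have hab' : uIcc b a ⊆ Icc a d := uIcc_subset_Icc ⟨hab.le, by linarith⟩ ⟨le_rfl, by linarith⟩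
  have hcd' : uIcc c d ⊆ Icc a d := uIcc_subset_Icc ⟨by linarith, hcd.le⟩ ⟨by linarith, le_rfl⟩
  have hω' : uIcc (c - b) (d - a) ⊆ Ici 0 := by
    rw [uIcc_of_le (by linarith)]; exact fun s hs => hs.1.trans' (sub_nonneg.2 hbc)
  have hmean_ab := inv_smul_integral_eq_integral_comp_add_mul_sub hab.ne' f
  rw [integral_symm, smul_neg, ← neg_smul, ← inv_neg, neg_sub] at hmean_ab
  rw [hmean_ab, inv_smul_integral_eq_integral_comp_add_mul_sub hcd.ne f,
    ← integral_sub ((hfc.mono hab').intervalIntegrable_comp_add_mul_sub)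
      ((hfc.mono hcd').intervalIntegrable_comp_add_mul_sub),
    hM, hm, max_add_min, show b - a + (d - c) = d - a - (c - b) by ring, one_div, ← smul_eq_mul,
    inv_smul_integral_eq_integral_comp_add_mul_sub (by linarith) ω]
  refine norm_integral_le_of_norm_le zero_le_one (ae_of_all _ fun r hr => ?_)
    (hωc.mono hω').intervalIntegrable_comp_add_mul_sub
  have hr' : r ∈ Icc (0 : ℝ) 1 := Ioc_subset_Icc_self hr
  have hdist : |c + (d - c) * r - (b + (a - b) * r)| = c - b + (d - a - (c - b)) * r := by
    rw [abs_of_nonneg (by nlinarith [hr'.1])]; ring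
  rw [norm_sub_rev, ← hdist]
  exact hf _ (hab' (add_mul_sub_mem_uIcc hr')) _ (hcd' (add_mul_sub_mem_uIcc hr'))

/-- Ostrowski-type inequality, case of disjoint intervals (`a < b ≤ c < d`). -/
theorem ostrowski_disjoint
    {E : Type*} [NormedAddCommGroup E] [NormedSpace ℝ E] [CompleteSpace E]
    (a b c d : ℝ) (hab : a < b) (hbc : b ≤ c) (hcd : c < d)
    (M m : ℝ) (hM : M = max (b - a) (d - c)) (hm : m = min (b - a) (d - c))
    (ω : ℝ → ℝ) (hω : IsModulus ω)
    (f : ℝ → E) (hf : HHolder ω a d f) :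
    ‖((b - a)⁻¹ • ∫ t in a..b, f t) - (d - c)⁻¹ • ∫ t in c..d, f t‖ ≤
      (1 / (M + m)) * ∫ s in (c - b)..(d - a), ω s :=
  ostrowski_disjoint_general a b c d hab hbc hcd M m hM hm ω hω f hf
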